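/- Let Ā ∈ ℝ^{m×n}, b̄ ∈ ℝ^m, τ > 0, F̄(x) = (1/2)‖Āx − b̄‖² + τ‖x‖₁, with optimal value F̄* attained at some x*. Then for every x ∈ ℝⁿ: F̄(x) − F̄* ≥ (1/2)‖Ā(x − x*)‖². -/
import Mathlib


open Matrix

/-- `F̄(x) = (1/2)‖Āx − b̄‖² + τ‖x‖₁`. -/
noncomputable def lsObj {m n : ℕ} (Ab : Matrix (Fin m) (Fin n) ℝ) (bb : Fin m → ℝ)
    (τ : ℝ) (x : Fin n → ℝ) : ℝ :=
  (1 / 2) * ((Ab.mulVec x - bb) ⬝ᵥ (Ab.mulVec x - bb)) + τ * ∑ i, |x i|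

/-- for any optimal `x*` of the ℓ₁-regularized least squares problem,
`F̄(x) − F̄* ≥ (1/2)‖Ā(x − x*)‖²` for all `x`. -/
theorem stmt11 {m n : ℕ} (Ab : Matrix (Fin m) (Fin n) ℝ) (bb : Fin m → ℝ) (τ : ℝ)
    (hτ : 0 < τ) (xstar : Fin n → ℝ)
    (hopt : ∀ y, lsObj Ab bb τ xstar ≤ lsObj Ab bb τ y) :
    ∀ x : Fin n → ℝ,
      lsObj Ab bb τ x - lsObj Ab bb τ xstar ≥
        (1 / 2) * (Ab.mulVec (x - xstar) ⬝ᵥ Ab.mulVec (x - xstar)) := by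
  intro x
  classical
  set d : Fin n → ℝ := x - xstar with hd
  set v : Fin m → ℝ := Ab.mulVec d with hv
  set r : Fin m → ℝ := Ab.mulVec xstar - bb with hr
  set Q : ℝ := v ⬝ᵥ v with hQdef
  set c : ℝ := r ⬝ᵥ v with hcdef
  set Δ : ℝ := (∑ i, |x i|) - ∑ i, |xstar i| with hΔdef
  clear_value d v r Q c Δ
  have hQnn : 0 ≤ Q := by
    rw [hQdef]
    exact Finset.sum_nonneg fun i _ => mul_self_nonneg (v i)
  have key : ∀ θ : ℝ, 0 ≤ θ → θ ≤ 1 →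
      0 ≤ θ * (c + τ * Δ) + θ ^ 2 * (1 / 2) * Q := by
    intro θ h0 h1
    have hy := hopt (xstar + θ • d)
    have hmv : Ab.mulVec (xstar + θ • d) - bb = r + θ • v := by
      rw [mulVec_add, mulVec_smul, hr, hv]
      abel
    have habs : ∑ i, |(xstar + θ • d) i| ≤ (1 - θ) * ∑ i, |xstar i| + θ * ∑ i, |x i| := by
      rw [Finset.mul_sum, Finset.mul_sum, ← Finset.sum_add_distrib]
      apply Finset.sum_le_sum
      intro i _
      have h2 : (xstar + θ • d) i = (1 - θ) * xstar i + θ * x i := by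
        simp [hd]; ring
      rw [h2]
      calc |(1 - θ) * xstar i + θ * x i| ≤ |(1 - θ) * xstar i| + |θ * x i| := abs_add_le _ _
        _ = (1 - θ) * |xstar i| + θ * |x i| := by
            rw [abs_mul, abs_mul, abs_of_nonneg (by linarith), abs_of_nonneg h0]
    have hquad : (Ab.mulVec (xstar + θ • d) - bb) ⬝ᵥ (Ab.mulVec (xstar + θ • d) - bb)
        = r ⬝ᵥ r + 2 * θ * c + θ ^ 2 * Q := by
      rw [hmv, hcdef, hQdef]
      simp only [add_dotProduct, dotProduct_add, smul_dotProduct, dotProduct_smul,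
        smul_eq_mul, dotProduct_comm v r]
      ring
    simp only [lsObj] at hy
    rw [hquad, ← hr] at hy
    have habs' : τ * ∑ i, |(xstar + θ • d) i|
        ≤ τ * ((1 - θ) * ∑ i, |xstar i| + θ * ∑ i, |x i|) :=
      mul_le_mul_of_nonneg_left habs hτ.le
    rw [hΔdef]
    nlinarith [hy, habs']
  have hG : 0 ≤ c + τ * Δ := by
    by_contra hneg
    push_neg at hneg
    rcases eq_or_lt_of_le hQnn with hQ0 | hQpos
    · have := key 1 zero_le_one le_rfl
      nlinarith
    · obtain ⟨θ, hθpos, hθle, hθle2⟩ :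
          ∃ θ : ℝ, 0 < θ ∧ θ ≤ 1 ∧ θ ≤ -(c + τ * Δ) / Q :=
        ⟨min 1 (-(c + τ * Δ) / Q), lt_min one_pos (div_pos (by linarith) hQpos),
          min_le_left _ _, min_le_right _ _⟩
      have hk := key θ hθpos.le hθle
      have h3 : θ * Q ≤ -(c + τ * Δ) := by
        calc θ * Q ≤ (-(c + τ * Δ) / Q) * Q :=
              mul_le_mul_of_nonneg_right hθle2 hQpos.le
          _ = -(c + τ * Δ) := div_mul_cancel₀ _ (ne_of_gt hQpos)
      have h4 := mul_le_mul_of_nonneg_left h3 hθpos.le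
      have h5 : θ * (c + τ * Δ) < 0 := mul_neg_of_pos_of_neg hθpos hneg
      nlinarith [hk, h4, h5]
  -- final computation
  have hmvx : Ab.mulVec x - bb = r + v := by
    rw [hr, hv, hd, mulVec_sub]
    abel
  have hquadx : (Ab.mulVec x - bb) ⬝ᵥ (Ab.mulVec x - bb) = r ⬝ᵥ r + 2 * c + Q := by
    rw [hmvx, hcdef, hQdef]
    simp only [add_dotProduct, dotProduct_add, dotProduct_comm v r]
    ring
  simp only [lsObj, ge_iff_le]
  rw [hquadx, ← hr]
  rw [hΔdef] at hG
  nlinarith [hG]
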